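/- Suppose a history σ of clients C_1, C_2 on registers X_1 (written by C_1) and X_2 (written by C_2) is fork-sequentially-consistent with views π_1, π_2. Assume: C_2's operations in σ are, in order, writes w^1,...,w^{z-1} to X_2 of distinct values v_1,...,v_{z-1} interleaved with reads r^1,...,r^z of X_1, where r^1,...,r^{z-1} return ⊥ and r^z returns u ≠ ⊥; C_1's operations in σ are a write w_1 of u to X_1 followed by reads of X_2, the last of which, r^l, returns v_{z-2}; and w_1 precedes r^l in σ. Then a contradiction follows; i.e., no such fork-sequentially-consistent history exists. -/

import Mathlib

/-- Data of a register operation: the register it accesses, whether it is a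
write, and its value (`some v` = value written / returned; `none` = ⊥). -/
structure OpData (Reg Val : Type) where
  reg : Reg
  isWrite : Bool
  val : Option Val

variable {Op Reg Val : Type}

/-- `o` is a write operation to register `X`. -/
def isWr (d : Op → OpData Reg Val) (X : Reg) (o : Op) : Prop :=
  (d o).reg = X ∧ (d o).isWrite = true

/-- `o` is a read operation of register `X`. -/
def isRd (d : Op → OpData Reg Val) (X : Reg) (o : Op) : Prop :=
  (d o).reg = X ∧ (d o).isWrite = false

/-- A sequential sequence `π` satisfies the sequential specification of
register `X`: every read of `X` returns the value of the most recent
preceding write to `X`, or the initial value ⊥ (`none`) if there is none. -/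
def SeqSpec (d : Op → OpData Reg Val) (X : Reg) (π : List Op) : Prop :=
  ∀ l1 o l2, π = l1 ++ o :: l2 → isRd d X o →
    ((∀ w ∈ l1, ¬ isWr d X w) ∧ (d o).val = none) ∨
    (∃ a w b, l1 = a ++ w :: b ∧ isWr d X w ∧ (d w).val = (d o).val ∧
      ∀ w' ∈ b, ¬ isWr d X w')

/-- `pfx π o` is the prefix of `π` ending with `o` (i.e. `π^o`). -/
def pfx [DecidableEq Op] (π : List Op) (o : Op) : List Op :=
  π.take (π.idxOf o + 1)

/-- The no-join property: for every operation in both sequences, the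
prefixes ending at it coincide. -/
def NoJoin [DecidableEq Op] (π₁ π₂ : List Op) : Prop :=
  ∀ o, o ∈ π₁ → o ∈ π₂ → pfx π₁ o = pfx π₂ o

/-- `o` occurs strictly before `o'` in the sequence `π`. -/
def before [DecidableEq Op] (π : List Op) (o o' : Op) : Prop :=
  o ∈ π ∧ o' ∈ π ∧ π.idxOf o < π.idxOf o'

/-! `r^z` returns `u`, so `w₁` occurs in π₂, and after `r^{z-1}`, which still returns ⊥.
Hence π₂ orders `w^{z-2} < w^{z-1} < w₁`. By no-join, π₁ agrees with π₂ up to `w₁`, so π₁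
orders `w^{z-2} < w^{z-1} < w₁ < r_l`. But `r_l` returns `v_{z-2}`, written only by `w^{z-2}`,
so the write `w^{z-1}` to `X₂` in between violates the sequential specification in π₁. -/

namespace List

variable {α : Type*} [DecidableEq α] {l : List α} {a : α}

theorem take_idxOf_append_cons_drop (h : a ∈ l) :
    l.take (l.idxOf a) ++ a :: l.drop (l.idxOf a + 1) = l := by
  have hlt : l.idxOf a < l.length := idxOf_lt_length_iff.2 h
  conv_rhs => rw [← take_append_drop (l.idxOf a) l, drop_eq_getElem_cons hlt,
    getElem_idxOf hlt]

end List

section Order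

variable [DecidableEq Op] {π π₁ π₂ : List Op} {a b c o : Op}

theorem before_trans (hab : before π a b) (hbc : before π b c) : before π a c :=
  ⟨hab.1, hbc.2.1, hab.2.2.trans hbc.2.2⟩

theorem before_irrefl : ¬ before π a a := fun h => lt_irrefl _ h.2.2

theorem before_of_not_before (ha : a ∈ π) (hb : b ∈ π) (hne : a ≠ b)
    (h : ¬ before π b a) : before π a b :=
  ⟨ha, hb, lt_of_le_of_ne (not_lt.1 fun hlt => h ⟨hb, ha, hlt⟩)
    fun heq => hne ((List.idxOf_inj ha).1 heq)⟩

theorem mem_pfx_iff : a ∈ pfx π o ↔ a ∈ π ∧ π.idxOf a ≤ π.idxOf o := by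
  refine ⟨fun h => ?_, fun ⟨ha, hle⟩ =>
    (List.mem_take_iff_idxOf_lt ha).2 (Nat.lt_succ_of_le hle)⟩
  have ha := List.mem_of_mem_take h
  exact ⟨ha, Nat.le_of_lt_succ ((List.mem_take_iff_idxOf_lt ha).1 h)⟩

theorem idxOf_pfx (ha : a ∈ pfx π o) : (pfx π o).idxOf a = π.idxOf a :=
  (List.take_prefix _ _).idxOf_eq_of_mem ha

theorem before_pfx_iff (hb : b ∈ pfx π o) : before (pfx π o) a b ↔ before π a b := by
  refine ⟨fun ⟨ha, _, hlt⟩ => ?_, fun ⟨ha, _, hlt⟩ => ?_⟩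
  · rw [idxOf_pfx ha, idxOf_pfx hb] at hlt
    exact ⟨List.mem_of_mem_take ha, List.mem_of_mem_take hb, hlt⟩
  · have ha' : a ∈ pfx π o := mem_pfx_iff.2 ⟨ha, hlt.le.trans (mem_pfx_iff.1 hb).2⟩
    exact ⟨ha', hb, by rwa [idxOf_pfx ha', idxOf_pfx hb]⟩

theorem NoJoin.before_of_before (h : NoJoin π₁ π₂) (h₁ : o ∈ π₁) (h₂ : o ∈ π₂)
    (hab : before π₂ a b) (hbo : π₂.idxOf b ≤ π₂.idxOf o) : before π₁ a b := by
  have hb : b ∈ pfx π₂ o := mem_pfx_iff.2 ⟨hab.2.1, hbo⟩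
  rw [← before_pfx_iff hb, ← h o h₁ h₂] at hab
  rw [← h o h₁ h₂] at hb
  exact (before_pfx_iff hb).1 hab

end Order

namespace SeqSpec

variable [DecidableEq Op] {d : Op → OpData Reg Val} {X : Reg} {π : List Op} {o w w' : Op}

theorem exists_write_before (hs : SeqSpec d X π) (ho : o ∈ π) (hrd : isRd d X o)
    (hval : (d o).val ≠ none) :
    ∃ w, isWr d X w ∧ (d w).val = (d o).val ∧ before π w o := by
  rcases hs _ o _ (List.take_idxOf_append_cons_drop ho).symm hrd with
    ⟨-, hnone⟩ | ⟨a, w, b, hsplit, hw, hwo, -⟩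
  · exact absurd hnone hval
  · have hmem : w ∈ π.take (π.idxOf o) := hsplit ▸ by simp
    have hwπ := List.mem_of_mem_take hmem
    exact ⟨w, hw, hwo, hwπ, ho, (List.mem_take_iff_idxOf_lt hwπ).1 hmem⟩

theorem not_before_of_read_none (hs : SeqSpec d X π)
    (hsome : ∀ o : Op, (d o).isWrite = true → (d o).val ≠ none) (hrd : isRd d X o)
    (hval : (d o).val = none) (hw : isWr d X w) : ¬ before π w o := by
  rintro ⟨hwπ, ho, hlt⟩
  rcases hs _ o _ (List.take_idxOf_append_cons_drop ho).symm hrd with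
    ⟨hnowrite, -⟩ | ⟨-, w₀, -, -, hw₀, hw₀o, -⟩
  · exact hnowrite w ((List.mem_take_iff_idxOf_lt hwπ).2 hlt) hw
  · exact hsome w₀ hw₀.2 (hw₀o.trans hval)

theorem not_isWr_of_between (hs : SeqSpec d X π) (hnd : π.Nodup) (hrd : isRd d X o)
    (huniq : ∀ w₀ ∈ π, isWr d X w₀ → (d w₀).val = (d o).val → w₀ = w)
    (hww' : before π w w') (hw'o : before π w' o) : ¬ isWr d X w' := by
  intro hw'
  have hw'pre : w' ∈ π.take (π.idxOf o) := (List.mem_take_iff_idxOf_lt hw'o.1).2 hw'o.2.2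
  rcases hs _ o _ (List.take_idxOf_append_cons_drop hw'o.2.1).symm hrd with
    ⟨hnowrite, -⟩ | ⟨a, w₀, b, hsplit, hw₀, hw₀o, hlast⟩
  · exact hnowrite w' hw'pre hw'
  have hpre : a ++ w₀ :: b <+: π := hsplit ▸ List.take_prefix _ _
  obtain rfl : w₀ = w := huniq w₀ (hpre.subset (by simp)) hw₀ hw₀o
  rw [hsplit] at hw'pre
  simp only [List.mem_append, List.mem_cons] at hw'pre
  rcases hw'pre with hw'a | rfl | hw'b
  -- `π` has no duplicates, so `w₀` sits at position `a.length` and anything in `a` precedes it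
  · have hwa : w₀ ∉ a := fun h =>
      (List.nodup_append.1 (hnd.sublist hpre.sublist)).2.2 _ h _ List.mem_cons_self rfl
    have hlt := hww'.2.2
    rw [← hpre.idxOf_eq_of_mem (by simp), ← hpre.idxOf_eq_of_mem (by simp [hw'a]),
      List.idxOf_append_of_mem hw'a, List.idxOf_append_of_notMem hwa, List.idxOf_cons_self]
      at hlt
    have := List.idxOf_lt_length_of_mem hw'a
    omega
  · exact before_irrefl hww'
  · exact hlast w' hw'b hw'

end SeqSpec

theorem fork_seq_consistency_blocking_general
    {Op Reg Val : Type} [DecidableEq Op] (d : Op → OpData Reg Val)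
    (X1 X2 : Reg)
    (z : ℕ) (hz : 3 ≤ z)
    (w r : ℕ → Op) (v : ℕ → Val) (w1 rl : Op) (u : Val)
    (π1 π2 : List Op) (hnd1 : π1.Nodup)
    (hNJ12 : NoJoin π1 π2)
    (hspec1 : ∀ X, SeqSpec d X π1) (hspec2 : ∀ X, SeqSpec d X π2)
    -- C₂'s operations:
    (hw : ∀ k, 1 ≤ k → k ≤ z - 1 → isWr d X2 (w k) ∧ (d (w k)).val = some (v k))
    (hr : ∀ k, 1 ≤ k → k ≤ z - 1 → isRd d X1 (r k) ∧ (d (r k)).val = none)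
    (hrz : isRd d X1 (r z) ∧ (d (r z)).val = some u)
    -- C₂'s real-time order, preserved in its view π₂:
    (hord1 : ∀ k, 1 ≤ k → k ≤ z - 1 → before π2 (w k) (r k))
    (hord2 : ∀ k, 1 ≤ k → k ≤ z - 2 → before π2 (r k) (w (k + 1)))
    (hord3 : before π2 (r (z - 1)) (r z))
    -- C₁'s operations and real-time order, preserved in its view π₁:
    (hw1 : isWr d X1 w1 ∧ (d w1).val = some u)
    (hrl : isRd d X2 rl ∧ (d rl).val = some (v (z - 2)))
    (hord4 : before π1 w1 rl)
    -- distinctness of written values: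
    (huuniq : ∀ o, (o ∈ π1 ∨ o ∈ π2) → isWr d X1 o → (d o).val = some u → o = w1)
    (hvuniq : ∀ o, (o ∈ π1 ∨ o ∈ π2) → isWr d X2 o →
      (d o).val = some (v (z - 2)) → o = w (z - 2))
    -- writes always write actual values (⊥ is not in the domain):
    (hsome : ∀ o : Op, (d o).isWrite = true → (d o).val ≠ none) :
    False := by
  obtain ⟨w₀, hw₀, hw₀u, hw₀rz⟩ :=
    (hspec2 X1).exists_write_before hord3.2.1 hrz.1 (by simp [hrz.2])
  have hw1π2 : w1 ∈ π2 := huuniq w₀ (Or.inr hw₀rz.1) hw₀ (hw₀u.trans hrz.2) ▸ hw₀rz.1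
  obtain ⟨hrd, hbot⟩ := hr (z - 1) (by omega) le_rfl
  have hne : r (z - 1) ≠ w1 := fun h => by simpa [h, hw1.1.2] using hrd.2
  have hrw1 : before π2 (r (z - 1)) w1 := before_of_not_before hord3.1 hw1π2 hne
    ((hspec2 X1).not_before_of_read_none hsome hrd hbot hw1.1)
  have hww1 : before π2 (w (z - 1)) w1 := before_trans (hord1 (z - 1) (by omega) le_rfl) hrw1
  have hww : before π2 (w (z - 2)) (w (z - 1)) := by
    have h := hord2 (z - 2) (by omega) le_rfl
    rw [show z - 2 + 1 = z - 1 by omega] at h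
    exact before_trans (hord1 (z - 2) (by omega) (by omega)) h
  exact (hspec1 X2).not_isWr_of_between hnd1 hrl.1
    (fun o ho hwr hval => hvuniq o (Or.inl ho) hwr (hval.trans hrl.2))
    (hNJ12.before_of_before hord4.1 hw1π2 hww hww1.2.2.le)
    (before_trans (hNJ12.before_of_before hord4.1 hw1π2 hww1 le_rfl) hord4)
    (hw (z - 1) (by omega) le_rfl).1

/-- No fork-sequentially-consistent history exists in which
client `C₂` performs writes `w¹,…,w^{z-1}` of distinct values `v₁,…,v_{z-1}`
to `X₂` interleaved with reads `r¹,…,r^z` of `X₁` returning ⊥ except `r^z`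
which returns `u ≠ ⊥`, while client `C₁` writes `u` to `X₁` (operation `w₁`)
and then reads `X₂`, its last read `rl` returning `v_{z-2}`.  The views
`π₁, π₂` of the two clients (satisfying the sequential specification,
per-client real-time order, and no-join) yield a contradiction. -/
theorem fork_seq_consistency_blocking
    {Op Reg Val : Type} [DecidableEq Op] (d : Op → OpData Reg Val)
    (X1 X2 : Reg) (hX : X1 ≠ X2)
    (z : ℕ) (hz : 3 ≤ z)
    (w r : ℕ → Op) (v : ℕ → Val) (w1 rl : Op) (u : Val)
    (π1 π2 : List Op) (hnd1 : π1.Nodup) (hnd2 : π2.Nodup)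
    (hNJ12 : NoJoin π1 π2) (hNJ21 : NoJoin π2 π1)
    (hspec1 : ∀ X, SeqSpec d X π1) (hspec2 : ∀ X, SeqSpec d X π2)
    -- C₂'s operations:
    (hw : ∀ k, 1 ≤ k → k ≤ z - 1 → isWr d X2 (w k) ∧ (d (w k)).val = some (v k))
    (hr : ∀ k, 1 ≤ k → k ≤ z - 1 → isRd d X1 (r k) ∧ (d (r k)).val = none)
    (hrz : isRd d X1 (r z) ∧ (d (r z)).val = some u)
    -- C₂'s real-time order, preserved in its view π₂:
    (hord1 : ∀ k, 1 ≤ k → k ≤ z - 1 → before π2 (w k) (r k))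
    (hord2 : ∀ k, 1 ≤ k → k ≤ z - 2 → before π2 (r k) (w (k + 1)))
    (hord3 : before π2 (r (z - 1)) (r z))
    -- C₁'s operations and real-time order, preserved in its view π₁:
    (hw1 : isWr d X1 w1 ∧ (d w1).val = some u)
    (hrl : isRd d X2 rl ∧ (d rl).val = some (v (z - 2)))
    (hord4 : before π1 w1 rl)
    -- distinctness of written values:
    (huuniq : ∀ o, (o ∈ π1 ∨ o ∈ π2) → isWr d X1 o → (d o).val = some u → o = w1)
    (hvuniq : ∀ o, (o ∈ π1 ∨ o ∈ π2) → isWr d X2 o →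
      (d o).val = some (v (z - 2)) → o = w (z - 2))
    (hvinj : Function.Injective v)
    -- writes always write actual values (⊥ is not in the domain):
    (hsome : ∀ o : Op, (d o).isWrite = true → (d o).val ≠ none) :
    False :=
  fork_seq_consistency_blocking_general d X1 X2 z hz w r v w1 rl u π1 π2 hnd1 hNJ12 hspec1 hspec2 hw
    hr hrz hord1 hord2 hord3 hw1 hrl hord4 huuniq hvuniq hsome
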